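/- The map Θ: ℝ⁴ × ℝ_d[x] → ℝ⁶ sending (x, f) to (X1 f(x), X2 f(x), X11 f(x), X21 f(x), X22 f(x), X12 f(x)) is a submersion for d ≥ 2, because its Jacobian with respect to the coefficients (α₁, α₂, β₁₁, β₁₂, β₂₂, α₃) of f is invertible at every point. -/

import Mathlib

noncomputable section

open Metric Set Function

/-- ℝ⁴ with the Euclidean metric. Coordinates: `x 0 = x₁`, `x 1 = x₂`, `x 2 = x₃`, `x 3 = x₄`. -/
abbrev E4 := EuclideanSpace ℝ (Fin 4)

/-- The vector field X1 = ∂/∂x1. -/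
def X1v (_ : E4) : E4 := (WithLp.equiv 2 (Fin 4 → ℝ)).symm ![1, 0, 0, 0]

/-- The vector field X2 = ∂/∂x2 + x1·∂/∂x3 + x3·∂/∂x4. -/
def X2v (x : E4) : E4 := (WithLp.equiv 2 (Fin 4 → ℝ)).symm ![0, 1, x 0, x 2]

/-- The vector field X3 = ∂/∂x3. -/
def X3v (_ : E4) : E4 := (WithLp.equiv 2 (Fin 4 → ℝ)).symm ![0, 0, 1, 0]

/-- The vector field X4 = ∂/∂x4. -/
def X4v (_ : E4) : E4 := (WithLp.equiv 2 (Fin 4 → ℝ)).symm ![0, 0, 0, 1]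

/-- X1 f : derivative of f along X1. -/
def X1 (f : E4 → ℝ) (x : E4) : ℝ := fderiv ℝ f x (X1v x)

/-- X2 f : derivative of f along X2. -/
def X2 (f : E4 → ℝ) (x : E4) : ℝ := fderiv ℝ f x (X2v x)

/-- X3 f : derivative of f along X3. -/
def X3 (f : E4 → ℝ) (x : E4) : ℝ := fderiv ℝ f x (X3v x)

/-- X4 f : derivative of f along X4. -/
def X4 (f : E4 → ℝ) (x : E4) : ℝ := fderiv ℝ f x (X4v x)

/-- The plane Δ_x = span{X1(x), X2(x)}. -/
def Delta (x : E4) : Submodule ℝ E4 := Submodule.span ℝ {X1v x, X2v x}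

/-- A polynomial of degree ≤ d (d ≥ 2) written as g + α₁x₁ + α₂x₂ + ½β₁₁x₁² + β₁₂x₁x₂
+ ½β₂₂x₂² + α₃x₃, where the six distinguished coefficients c = (α₁, α₂, β₁₁, β₁₂, β₂₂, α₃)
are the parameters and g collects all the remaining terms. -/
def pert (g : E4 → ℝ) (c : Fin 6 → ℝ) (x : E4) : ℝ :=
  g x + c 0 * x 0 + c 1 * x 1 + c 2 / 2 * (x 0) ^ 2 + c 3 * (x 0 * x 1)
    + c 4 / 2 * (x 1) ^ 2 + c 5 * x 2

/-- The map Θ(x, f) = (X1f(x), X2f(x), X11f(x), X21f(x), X22f(x), X12f(x)). -/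
def Theta (g : E4 → ℝ) (p : E4 × (Fin 6 → ℝ)) : Fin 6 → ℝ :=
  ![X1 (pert g p.2) p.1, X2 (pert g p.2) p.1,
    X1 (X1 (pert g p.2)) p.1, X2 (X1 (pert g p.2)) p.1,
    X2 (X2 (pert g p.2)) p.1, X1 (X2 (pert g p.2)) p.1]

/-- The Jacobian of Θ with respect to the coefficients (α₁, α₂, β₁₁, β₁₂, β₂₂, α₃). -/
def JacTheta (x : E4) : Matrix (Fin 6) (Fin 6) ℝ :=
  !![1, 0, x 0, x 1, 0,   0;
     0, 1, 0,   x 0, x 1, x 0;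
     0, 0, 1,   0,   0,   0;
     0, 0, 0,   1,   0,   0;
     0, 0, 0,   0,   1,   0;
     0, 0, 0,   1,   0,   1]

/-!
Write f = g + q_c, where q_c is the quadratic polynomial carrying the coefficients
c = (α₁, α₂, β₁₁, β₁₂, β₂₂, α₃). The first X-derivatives of q_c are affine in x and its second
X-derivatives are constants (α₃ enters through X2 x₃ = x₁), so Θ(x, g + q_c) = Θ(x, g) + J(x) c
with J = `JacTheta`. Since det J(x) = 1, the partial derivative of Θ in c is already onto, hence
so is the full derivative.
-/

theorem PiLp.fderiv_apply {𝕜 ι : Type*} {E : ι → Type*} [NontriviallyNormedField 𝕜]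
    [∀ i, NormedAddCommGroup (E i)] [∀ i, NormedSpace 𝕜 (E i)] [Fintype ι]
    (p : ENNReal) [Fact (1 ≤ p)] (x : PiLp p E) (i : ι) :
    fderiv 𝕜 (fun y : PiLp p E => y i) x = PiLp.proj p E i :=
  (PiLp.hasFDerivAt_apply p x i).fderiv

theorem surjective_fderiv_of_hasFDerivAt_right {𝕜 E F G : Type*} [NontriviallyNormedField 𝕜]
    [NormedAddCommGroup E] [NormedSpace 𝕜 E] [NormedAddCommGroup F] [NormedSpace 𝕜 F]
    [NormedAddCommGroup G] [NormedSpace 𝕜 G] {f : E × F → G} {x : E} {y : F} {L : F →L[𝕜] G}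
    (hf : DifferentiableAt 𝕜 f (x, y)) (hL : HasFDerivAt (fun y' => f (x, y')) L y)
    (hsurj : Surjective L) : Surjective (fderiv 𝕜 f (x, y)) := by
  have hcomp : fderiv 𝕜 f (x, y) ∘L ContinuousLinearMap.inr 𝕜 E F = L :=
    (hf.hasFDerivAt.comp y (hasFDerivAt_prodMk_right x y)).unique hL
  intro z
  obtain ⟨v, rfl⟩ := hsurj z
  exact ⟨(0, v), by rw [← hcomp]; rfl⟩

theorem contDiff_X2v : ContDiff ℝ ⊤ X2v := by
  rw [contDiff_piLp]
  intro i
  fin_cases i <;>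
    simp only [X2v, Fin.isValue, WithLp.equiv_symm_apply, Fin.zero_eta, Fin.mk_one, Fin.reduceFinMk,
      Matrix.cons_val_zero, Matrix.cons_val_one, Matrix.cons_val] <;>
    fun_prop

section VectorFields

variable {f h : E4 → ℝ}

theorem X1_add (hf : Differentiable ℝ f) (hh : Differentiable ℝ h) : X1 (f + h) = X1 f + X1 h := by
  funext x
  simp [X1, fderiv_add (hf x) (hh x)]

theorem X2_add (hf : Differentiable ℝ f) (hh : Differentiable ℝ h) : X2 (f + h) = X2 f + X2 h := by
  funext x
  simp [X2, fderiv_add (hf x) (hh x)]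

theorem ContDiff.X1 {m n : WithTop ℕ∞} (hf : ContDiff ℝ n f) (hmn : m + 1 ≤ n) :
    ContDiff ℝ m (X1 f) :=
  (hf.fderiv_right hmn).clm_apply contDiff_const

theorem ContDiff.X2 {m n : WithTop ℕ∞} (hf : ContDiff ℝ n f) (hmn : m + 1 ≤ n) :
    ContDiff ℝ m (X2 f) :=
  (hf.fderiv_right hmn).clm_apply (contDiff_X2v.of_le le_top)

end VectorFields

def quadPart (c : Fin 6 → ℝ) (x : E4) : ℝ :=
  c 0 * x 0 + c 1 * x 1 + c 2 / 2 * (x 0) ^ 2 + c 3 * (x 0 * x 1) + c 4 / 2 * (x 1) ^ 2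
    + c 5 * x 2

theorem pert_eq_add (g : E4 → ℝ) (c : Fin 6 → ℝ) : pert g c = g + quadPart c := by
  funext x
  simp only [pert, quadPart, Pi.add_apply]
  ring

theorem pert_zero (g : E4 → ℝ) : pert g 0 = g := by
  funext x
  simp [pert]

theorem contDiff_quadPart (c : Fin 6 → ℝ) : ContDiff ℝ ⊤ (quadPart c) := by
  unfold quadPart
  fun_prop

theorem X1_quadPart (c : Fin 6 → ℝ) : X1 (quadPart c) = fun x => c 0 + c 2 * x 0 + c 3 * x 1 := by
  funext x
  unfold quadPart
  simp (disch := fun_prop) [X1, X1v, fderiv_fun_add, fderiv_fun_mul, fderiv_fun_pow,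
    PiLp.fderiv_apply]
  ring

theorem X2_quadPart (c : Fin 6 → ℝ) :
    X2 (quadPart c) = fun x => c 1 + (c 3 + c 5) * x 0 + c 4 * x 1 := by
  funext x
  unfold quadPart
  simp (disch := fun_prop) [X2, X2v, fderiv_fun_add, fderiv_fun_mul, fderiv_fun_pow,
    PiLp.fderiv_apply]
  ring

theorem X1_X1_quadPart (c : Fin 6 → ℝ) (x : E4) : X1 (X1 (quadPart c)) x = c 2 := by
  simp (disch := fun_prop) [X1_quadPart, X1, X1v, fderiv_fun_add, fderiv_fun_mul,
    PiLp.fderiv_apply]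

theorem X2_X1_quadPart (c : Fin 6 → ℝ) (x : E4) : X2 (X1 (quadPart c)) x = c 3 := by
  simp (disch := fun_prop) [X1_quadPart, X2, X2v, fderiv_fun_add, fderiv_fun_mul,
    PiLp.fderiv_apply]

theorem X2_X2_quadPart (c : Fin 6 → ℝ) (x : E4) : X2 (X2 (quadPart c)) x = c 4 := by
  simp (disch := fun_prop) [X2_quadPart, X2, X2v, fderiv_fun_add, fderiv_fun_mul,
    PiLp.fderiv_apply]

theorem X1_X2_quadPart (c : Fin 6 → ℝ) (x : E4) : X1 (X2 (quadPart c)) x = c 3 + c 5 := by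
  simp (disch := fun_prop) [X2_quadPart, X1, X1v, fderiv_fun_add, fderiv_fun_mul,
    PiLp.fderiv_apply]

theorem Theta_eq_add_mulVec {g : E4 → ℝ} (hg : ContDiff ℝ 2 g) (x : E4) (c : Fin 6 → ℝ) :
    Theta g (x, c) = Theta g (x, 0) + (JacTheta x).mulVec c := by
  have hq := contDiff_quadPart c
  have hq0 : Differentiable ℝ (quadPart c) := hq.differentiable (by norm_num)
  have hq1 : Differentiable ℝ (X1 (quadPart c)) :=
    (hq.X1 (m := 1) le_top).differentiable one_ne_zero
  have hq2 : Differentiable ℝ (X2 (quadPart c)) :=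
    (hq.X2 (m := 1) le_top).differentiable one_ne_zero
  have hg0 : Differentiable ℝ g := hg.differentiable (by norm_num)
  have hg1 : Differentiable ℝ (X1 g) := (hg.X1 (m := 1) (by norm_num)).differentiable one_ne_zero
  have hg2 : Differentiable ℝ (X2 g) := (hg.X2 (m := 1) (by norm_num)).differentiable one_ne_zero
  simp only [Theta, pert_zero]
  -- three passes, since `simp` rewrites inside-out and `X1_quadPart` would fire too early
  simp only [pert_eq_add, X1_add hg0 hq0, X2_add hg0 hq0]
  simp only [X1_add hg1 hq1, X2_add hg1 hq1, X1_add hg2 hq2, X2_add hg2 hq2, Pi.add_apply,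
    X1_X1_quadPart, X2_X1_quadPart, X2_X2_quadPart, X1_X2_quadPart]
  simp only [X1_quadPart, X2_quadPart]
  ext i
  fin_cases i <;>
    simp only [JacTheta, Fin.isValue, Fin.zero_eta, Fin.mk_one, Fin.reduceFinMk,
        Matrix.cons_val_zero, Matrix.cons_val_one, Matrix.cons_val, Matrix.cons_mulVec,
        Matrix.empty_mulVec, dotProduct, Fin.sum_univ_six, one_mul, zero_mul, add_zero, zero_add,
        Pi.add_apply] <;>
    ring

theorem differentiable_Theta {g : E4 → ℝ} (hg : ContDiff ℝ 3 g) : Differentiable ℝ (Theta g) := by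
  have hbase : Differentiable ℝ fun x => Theta g (x, 0) := by
    have h1 : ContDiff ℝ 2 (X1 g) := hg.X1 (by norm_num)
    have h2 : ContDiff ℝ 2 (X2 g) := hg.X2 (by norm_num)
    refine differentiable_pi.2 fun i => ?_
    fin_cases i <;>
      simp only [Theta, pert_zero, Fin.zero_eta, Fin.mk_one, Fin.reduceFinMk, Fin.isValue,
        Matrix.cons_val_zero, Matrix.cons_val_one, Matrix.cons_val]
    · exact h1.differentiable two_ne_zero
    · exact h2.differentiable two_ne_zero
    · exact (h1.X1 (m := 1) (by norm_num)).differentiable one_ne_zero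
    · exact (h1.X2 (m := 1) (by norm_num)).differentiable one_ne_zero
    · exact (h2.X2 (m := 1) (by norm_num)).differentiable one_ne_zero
    · exact (h2.X1 (m := 1) (by norm_num)).differentiable one_ne_zero
  have hlin : Differentiable ℝ fun p : E4 × (Fin 6 → ℝ) => (JacTheta p.1).mulVec p.2 := by
    refine differentiable_pi.2 fun i => ?_
    fin_cases i <;>
      simp only [JacTheta, Fin.isValue, Fin.zero_eta, Fin.mk_one, Fin.reduceFinMk,
          Matrix.cons_val_zero, Matrix.cons_val_one, Matrix.cons_val, Matrix.cons_mulVec,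
          Matrix.empty_mulVec, dotProduct, Fin.sum_univ_six, one_mul, zero_mul, add_zero,
          zero_add] <;>
      fun_prop
  rw [show Theta g = fun p => Theta g (p.1, 0) + (JacTheta p.1).mulVec p.2 from
    funext fun p => Theta_eq_add_mulVec (hg.of_le (by norm_num)) p.1 p.2]
  exact (hbase.comp differentiable_fst).add hlin

theorem JacTheta_det (x : E4) : (JacTheta x).det = 1 := by
  simp [JacTheta, Matrix.det_succ_row_zero, Fin.sum_univ_succ]

/-- the Jacobian of Θ with respect to the coefficients
(α₁, α₂, β₁₁, β₁₂, β₂₂, α₃) is invertible at every point, and consequently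
Θ is a submersion. -/
theorem stmt5 (g : E4 → ℝ) (hg : ContDiff ℝ ⊤ g) :
    (∀ x : E4, IsUnit (JacTheta x)) ∧
    (∀ p : E4 × (Fin 6 → ℝ), Function.Surjective (fderiv ℝ (Theta g) p)) := by
  have hunit (x : E4) : IsUnit (JacTheta x) := by
    simp [Matrix.isUnit_iff_isUnit_det, JacTheta_det]
  refine ⟨hunit, fun ⟨x, c⟩ => ?_⟩
  have hpartial : HasFDerivAt (fun c' => Theta g (x, c'))
      (JacTheta x).mulVecLin.toContinuousLinearMap c := by
    rw [funext (Theta_eq_add_mulVec (hg.of_le le_top) x)]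
    exact (JacTheta x).mulVecLin.toContinuousLinearMap.hasFDerivAt.const_add _
  exact surjective_fderiv_of_hasFDerivAt_right (differentiable_Theta (hg.of_le le_top) _)
    hpartial (Matrix.mulVec_surjective_iff_isUnit.2 (hunit x))
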